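/- arXiv:2508.20825 — 4 statements merged into one kernel-verified Lean document; each statement's English description precedes it below -/
import Mathlib

section
/- For all integers n ≥ k ≥ 2, the complete 4-partite graph K_{n,n,n,n} contains a spanning subgraph with 4n² + (k−1)n edges that contains no k pairwise vertex-disjoint triangles. -/
/-!
Split the four parts into the pairs `{V₀, V₁}` and `{V₂, V₃}` and take all `4n²` edges between
the two pairs; this bipartite graph has no triangle. Add all edges between `V₁` and a set `A` of
`k - 1` vertices of `V₀`. Every triangle now uses one of the added edges, hence a vertex of `A`,
so disjoint triangles number at most `|A| = k - 1`.
-/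

open Finset SimpleGraph

/-- `G` contains `k` pairwise vertex-disjoint triangles (a copy of `kK₃`). -/
def HasKDisjointTriangles {V : Type*} (G : SimpleGraph V) (k : ℕ) : Prop :=
  ∃ t : Fin k → Finset V,
    (∀ i, (t i).card = 3 ∧ ((t i : Set V)).Pairwise G.Adj) ∧
    Pairwise (Function.onFun Disjoint t)

theorem HasKDisjointTriangles.le_card_of_forall_isNClique_three {V : Type*} {G : SimpleGraph V}
    {k : ℕ} (S : Finset V) (hS : ∀ t, G.IsNClique 3 t → ∃ v ∈ t, v ∈ S)
    (h : HasKDisjointTriangles G k) : k ≤ #S := by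
  obtain ⟨t, htri, hdisj⟩ := h
  choose v hvt hvS using fun i => hS (t i) ⟨(htri i).2, (htri i).1⟩
  have hinj : Function.Injective v := fun i j hij => by
    by_contra hne
    exact Finset.disjoint_left.mp (hdisj hne) (hvt i) (hij ▸ hvt j)
  simpa using Finset.card_le_card_of_injOn (s := univ) v (fun i _ => hvS i) hinj.injOn

theorem SimpleGraph.IsNClique.exists_adj_right_of_cliqueFree {V : Type*} {B E : SimpleGraph V}
    {n : ℕ} {t : Finset V} (hB : B.CliqueFree n) (ht : (B ⊔ E).IsNClique n t) :
    ∃ u ∈ t, ∃ v ∈ t, E.Adj u v := by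
  by_contra! h
  refine hB t ⟨fun u hu v hv huv => ?_, ht.card_eq⟩
  exact (ht.isClique hu hv huv).resolve_right (h u hu v hv)

theorem SimpleGraph.ncard_edgeSet_top_between {V : Type*} [Fintype V] {s t : Finset V}
    (hst : Disjoint s t) : ((⊤ : SimpleGraph V).between s t).edgeSet.ncard = #s * #t := by
  classical
  have hdeg : ∀ v ∈ s, ((⊤ : SimpleGraph V).between s t).degree v = #t := by
    intro v hv
    rw [← card_neighborFinset_eq_degree]
    congr 1
    ext w
    have : v ∉ t := Finset.disjoint_left.mp hst hv
    simp only [mem_neighborFinset, between_adj, top_adj, mem_coe]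
    grind
  rw [← coe_edgeFinset, Set.ncard_coe_finset,
    ← isBipartiteWith_sum_degrees_eq_card_edges (between_isBipartiteWith (disjoint_coe.mpr hst)),
    sum_congr rfl hdeg, sum_const, smul_eq_mul]

section PairedParts

variable {α : Type*}

def blocks (I : Finset (Fin 4)) (A : Finset α) : Finset (Σ _ : Fin 4, α) :=
  I.sigma fun _ => A

@[simp]
theorem mem_blocks {I : Finset (Fin 4)} {A : Finset α} {x : Σ _ : Fin 4, α} :
    x ∈ blocks I A ↔ x.1 ∈ I ∧ x.2 ∈ A :=
  mem_sigma

theorem card_blocks (I : Finset (Fin 4)) (A : Finset α) : #(blocks I A) = #I * #A := by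
  simp [blocks, card_sigma]

theorem disjoint_blocks {I J : Finset (Fin 4)} (A B : Finset α) (h : Disjoint I J) :
    Disjoint (blocks I A) (blocks J B) :=
  Finset.disjoint_left.mpr fun _ hI hJ =>
    Finset.disjoint_left.mp h (mem_blocks.mp hI).1 (mem_blocks.mp hJ).1

variable [Fintype α]

variable (α) in
def crossPairsGraph : SimpleGraph (Σ _ : Fin 4, α) :=
  (⊤ : SimpleGraph _).between ↑(blocks {0, 1} (univ : Finset α)) ↑(blocks {2, 3} (univ : Finset α))

def pairedPartsGraph (A : Finset α) : SimpleGraph (Σ _ : Fin 4, α) :=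
  crossPairsGraph α ⊔ (⊤ : SimpleGraph _).between ↑(blocks {0} A) ↑(blocks {1} (univ : Finset α))

theorem pairedPartsGraph_le_completeMultipartiteGraph (A : Finset α) :
    pairedPartsGraph A ≤ completeMultipartiteGraph fun _ : Fin 4 => α := by
  rintro ⟨i, a⟩ ⟨j, b⟩ h
  simp only [pairedPartsGraph, crossPairsGraph, sup_adj, between_adj, top_adj, mem_coe,
    mem_blocks] at h
  change i ≠ j
  grind

theorem ncard_edgeSet_pairedPartsGraph (A : Finset α) :
    (pairedPartsGraph A).edgeSet.ncard = 4 * Fintype.card α ^ 2 + #A * Fintype.card α := by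
  have hdisj : Disjoint (crossPairsGraph α).edgeSet
      ((⊤ : SimpleGraph _).between ↑(blocks {0} A) ↑(blocks {1} (univ : Finset α))).edgeSet := by
    rw [Set.disjoint_left, Sym2.forall]
    rintro ⟨i, a⟩ ⟨j, b⟩ h h'
    simp only [crossPairsGraph, mem_edgeSet, between_adj, top_adj, mem_coe, mem_blocks] at h h'
    grind
  rw [pairedPartsGraph, edgeSet_sup, Set.ncard_union_eq hdisj, crossPairsGraph,
    ncard_edgeSet_top_between (disjoint_blocks _ _ (by decide)),
    ncard_edgeSet_top_between (disjoint_blocks _ _ (by decide)), card_blocks, card_blocks,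
    card_blocks, card_blocks, card_univ, card_pair (by decide : (0 : Fin 4) ≠ 1),
    card_pair (by decide : (2 : Fin 4) ≠ 3), card_singleton, card_singleton]
  ring

theorem cliqueFree_three_crossPairsGraph : (crossPairsGraph α).CliqueFree 3 :=
  (between_isBipartite (disjoint_coe.mpr (disjoint_blocks _ _ (by decide)))).cliqueFree
    (by norm_num)

theorem exists_mem_blocks_of_isNClique_pairedPartsGraph {A : Finset α}
    {t : Finset (Σ _ : Fin 4, α)} (ht : (pairedPartsGraph A).IsNClique 3 t) :
    ∃ v ∈ t, v ∈ blocks {0} A := by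
  obtain ⟨u, hu, v, hv, -, huv⟩ :=
    ht.exists_adj_right_of_cliqueFree cliqueFree_three_crossPairsGraph
  rcases huv with ⟨huS, -⟩ | ⟨-, hvS⟩
  exacts [⟨u, hu, huS⟩, ⟨v, hv, hvS⟩]

theorem not_hasKDisjointTriangles_pairedPartsGraph {A : Finset α} {k : ℕ} (hk : #A < k) :
    ¬ HasKDisjointTriangles (pairedPartsGraph A) k := fun h => by
  have := h.le_card_of_forall_isNClique_three _ fun _ =>
    exists_mem_blocks_of_isNClique_pairedPartsGraph
  rw [card_blocks, card_singleton, one_mul] at this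
  omega

end PairedParts

/-- For all integers `n ≥ k ≥ 2`, the complete 4-partite graph `K_{n,n,n,n}` contains a
spanning subgraph with `4n² + (k-1)n` edges having no `k` pairwise vertex-disjoint
triangles; hence `ex(K_{n,n,n,n}, kK₃) ≥ 4n² + (k-1)n`. -/
theorem turan_K4partite_lower_bound (n k : ℕ) (hk : 2 ≤ k) (hkn : k ≤ n) :
    ∃ H : SimpleGraph (Σ _ : Fin 4, Fin n),
      H ≤ SimpleGraph.completeMultipartiteGraph (fun _ : Fin 4 => Fin n) ∧
      H.edgeSet.ncard = 4 * n ^ 2 + (k - 1) * n ∧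
      ¬ HasKDisjointTriangles H k := by
  obtain ⟨A, -, hA⟩ := exists_subset_card_eq (s := (univ : Finset (Fin n))) (n := k - 1)
    (by simp; omega)
  refine ⟨pairedPartsGraph A, pairedPartsGraph_le_completeMultipartiteGraph A, ?_,
    not_hasKDisjointTriangles_pairedPartsGraph (by omega)⟩
  rw [ncard_edgeSet_pairedPartsGraph, hA, Fintype.card_fin]
end

section
/- For all integers k, n₁, n₂, n₃, n₄ with 2 ≤ k ≤ n₁ + n₂, the complete 4-partite graph K_{n₁,n₂,n₃,n₄} has a subgraph with (n₁+n₂+n₃)n₄ + (k−1)n₃ edges containing no k pairwise vertex-disjoint triangles. -/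
open SimpleGraph

variable {V : Type*}

theorem HasKDisjointTriangles.le_ncard {G : SimpleGraph V} {k : ℕ} {S : Set V}
    (h : HasKDisjointTriangles G k) (hS : ∀ t, G.IsNClique 3 t → ∃ x ∈ t, x ∈ S)
    (hfin : S.Finite) : k ≤ S.ncard := by
  obtain ⟨t, htri, hdisj⟩ := h
  choose f hft hfS using fun i => hS (t i) ⟨(htri i).2, (htri i).1⟩
  have hinj : Set.InjOn f Set.univ := fun i _ j _ hij => by
    by_contra hne
    exact Finset.disjoint_left.mp (hdisj hne) (hft i) (hij ▸ hft j)
  simpa using Set.ncard_le_ncard_of_injOn f (fun i _ => hfS i) hinj hfin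

theorem Set.ncard_preimage_sigma_fst {ι : Type*} {κ : ι → Type*} [∀ i, Fintype (κ i)]
    (I : Finset ι) :
    (Sigma.fst ⁻¹' (I : Set ι) : Set (Σ i, κ i)).ncard = ∑ i ∈ I, Fintype.card (κ i) := by
  have : (Sigma.fst ⁻¹' (I : Set ι) : Set (Σ i, κ i)) =
      ↑(I.sigma fun i => (Finset.univ : Finset (κ i))) := by
    ext; simp
  rw [this, Set.ncard_coe_finset, Finset.card_sigma]
  rfl

namespace SimpleGraph

variable {G G' : SimpleGraph V} {s t s' t' A B C S : Set V}

theorem IsCompleteBetween.edgeSet_between (h : G.IsCompleteBetween s t) :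
    (G.between s t).edgeSet = (fun p : V × V => s(p.1, p.2)) '' s ×ˢ t := by
  ext e
  induction e using Sym2.ind with
  | _ u v =>
    simp only [mem_edgeSet, between_adj, Set.mem_image, Set.mem_prod, Prod.exists, Sym2.eq_iff]
    constructor
    · rintro ⟨-, ⟨hu, hv⟩ | ⟨hu, hv⟩⟩
      · exact ⟨u, v, ⟨hu, hv⟩, .inl ⟨rfl, rfl⟩⟩
      · exact ⟨v, u, ⟨hv, hu⟩, .inr ⟨rfl, rfl⟩⟩
    · rintro ⟨a, b, ⟨ha, hb⟩, ⟨rfl, rfl⟩ | ⟨rfl, rfl⟩⟩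
      · exact ⟨h ha hb, .inl ⟨ha, hb⟩⟩
      · exact ⟨(h ha hb).symm, .inr ⟨hb, ha⟩⟩

theorem IsCompleteBetween.ncard_edgeSet_between (h : G.IsCompleteBetween s t) :
    (G.between s t).edgeSet.ncard = s.ncard * t.ncard := by
  rw [h.edgeSet_between, ← Set.ncard_prod]
  refine Set.InjOn.ncard_image fun p hp q hq hpq => ?_
  rcases Sym2.eq_iff.mp hpq with ⟨h₁, h₂⟩ | ⟨h₁, -⟩
  · exact Prod.ext h₁ h₂
  · exact absurd (h₁ ▸ hq.2) (Set.disjoint_left.mp h.disjoint hp.1)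

theorem disjoint_edgeSet_between (hs' : Disjoint s s') (ht' : Disjoint s t') :
    Disjoint (G.between s t).edgeSet (G'.between s' t').edgeSet := by
  refine Set.disjoint_left.mpr fun e he he' => ?_
  induction e using Sym2.ind with
  | _ u v =>
    have hu' : u ∈ s' ∨ u ∈ t' := he'.2.imp And.left And.left
    have hv' : v ∈ t' ∨ v ∈ s' := he'.2.imp And.right And.right
    rcases he.2 with ⟨hu, -⟩ | ⟨-, hv⟩
    · exact hu'.elim (Set.disjoint_left.mp hs' hu) (Set.disjoint_left.mp ht' hu)
    · exact hv'.elim (Set.disjoint_left.mp ht' hv) (Set.disjoint_left.mp hs' hv)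

theorem notMem_of_adj_between_sup (hC : Disjoint A C) (hB : Disjoint A B) (hS : Disjoint A S)
    {x y : V} (hxy : (G.between A C ⊔ G'.between B S).Adj x y) (hx : x ∈ A) : y ∉ A := by
  intro hy
  rcases hxy with ⟨-, ⟨-, h⟩ | ⟨h, -⟩⟩ | ⟨-, ⟨h, -⟩ | ⟨h, -⟩⟩
  · exact Set.disjoint_left.mp hC hy h
  · exact Set.disjoint_left.mp hC hx h
  · exact Set.disjoint_left.mp hB hx h
  · exact Set.disjoint_left.mp hS hx h

theorem mem_or_mem_of_adj_between_sup {x y : V} (hxy : (G.between A C ⊔ G'.between B S).Adj x y)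
    (hx : x ∉ A) (hy : y ∉ A) : x ∈ S ∨ y ∈ S := by
  rcases hxy with ⟨-, ⟨h, -⟩ | ⟨-, h⟩⟩ | ⟨-, ⟨-, h⟩ | ⟨h, -⟩⟩
  · exact absurd h hx
  · exact absurd h hy
  · exact .inr h
  · exact .inl h

theorem exists_mem_of_isNClique_three_between_sup (hC : Disjoint A C) (hB : Disjoint A B)
    (hS : Disjoint A S) {t : Finset V} (ht : (G.between A C ⊔ G'.between B S).IsNClique 3 t) :
    ∃ x ∈ t, x ∈ S := by
  classical
  obtain ⟨a, b, c, hab, hac, hbc, rfl⟩ := is3Clique_iff.mp ht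
  suffices a ∈ S ∨ b ∈ S ∨ c ∈ S by simpa using this
  have hA {x y : V} (hxy : (G.between A C ⊔ G'.between B S).Adj x y) :=
    notMem_of_adj_between_sup hC hB hS hxy
  by_cases ha : a ∈ A
  · exact .inr (mem_or_mem_of_adj_between_sup hbc (hA hab ha) (hA hac ha))
  by_cases hb : b ∈ A
  · exact (mem_or_mem_of_adj_between_sup hac ha (hA hbc hb)).imp_right .inr
  · exact (mem_or_mem_of_adj_between_sup hab ha hb).elim .inl (.inr ∘ .inl)

theorem isCompleteBetween_completeMultipartiteGraph {ι : Type*} {κ : ι → Type*} {I J : Set ι}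
    (h : Disjoint I J) :
    (completeMultipartiteGraph κ).IsCompleteBetween (Sigma.fst ⁻¹' I) (Sigma.fst ⁻¹' J) :=
  fun _ hx _ hy hxy => Set.disjoint_left.mp h hx (hxy ▸ hy)

end SimpleGraph

/-- For all integers `k, n₁, n₂, n₃, n₄` with `2 ≤ k ≤ n₁ + n₂`, the complete 4-partite
graph `K_{n₁,n₂,n₃,n₄}` has a subgraph with `(n₁+n₂+n₃)n₄ + (k-1)n₃` edges containing
no `k` pairwise vertex-disjoint triangles. -/
theorem turan_K4partite_general_lower_bound (k n₁ n₂ n₃ n₄ : ℕ)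
    (hk : 2 ≤ k) (hkn : k ≤ n₁ + n₂) :
    ∃ H : SimpleGraph (Σ i : Fin 4, Fin (![n₁, n₂, n₃, n₄] i)),
      H ≤ SimpleGraph.completeMultipartiteGraph (fun i : Fin 4 => Fin (![n₁, n₂, n₃, n₄] i)) ∧
      H.edgeSet.ncard = (n₁ + n₂ + n₃) * n₄ + (k - 1) * n₃ ∧
      ¬ HasKDisjointTriangles H k := by
  set K := completeMultipartiteGraph fun i : Fin 4 => Fin (![n₁, n₂, n₃, n₄] i)
  set P : Finset (Fin 4) → Set (Σ i : Fin 4, Fin (![n₁, n₂, n₃, n₄] i)) :=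
    fun I => Sigma.fst ⁻¹' (I : Set (Fin 4))
  have hP (I : Finset (Fin 4)) : (P I).ncard = ∑ i ∈ I, ![n₁, n₂, n₃, n₄] i := by
    simpa using Set.ncard_preimage_sigma_fst (κ := fun i : Fin 4 => Fin (![n₁, n₂, n₃, n₄] i)) I
  have hP₀₁ : (P {0, 1}).ncard = n₁ + n₂ := by simp [hP]
  have hP₀₁₂ : (P {0, 1, 2}).ncard = n₁ + n₂ + n₃ := by simp [hP, add_assoc]
  have hP₂ : (P {2}).ncard = n₃ := by simp [hP]
  have hP₃ : (P {3}).ncard = n₄ := by simp [hP]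
  have hK {I J : Finset (Fin 4)} (h : Disjoint I J) : K.IsCompleteBetween (P I) (P J) :=
    isCompleteBetween_completeMultipartiteGraph (Finset.disjoint_coe.mpr h)
  have hD {I J : Finset (Fin 4)} (h : Disjoint I J) : Disjoint (P I) (P J) :=
    (Finset.disjoint_coe.mpr h).preimage _
  obtain ⟨S, hSP, hS⟩ := Set.exists_subset_card_eq (s := P {0, 1}) (n := k - 1)
    (by rw [hP₀₁]; omega)
  have hKS : K.IsCompleteBetween (P {2}) S := fun _ hx _ hy => hK (by decide) hx (hSP hy)
  refine ⟨K.between (P {3}) (P {0, 1, 2}) ⊔ K.between (P {2}) S,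
    sup_le between_le between_le, ?_, fun h => ?_⟩
  · rw [edgeSet_sup, Set.ncard_union_eq (disjoint_edgeSet_between (hD (by decide))
      ((hD (by decide)).mono_right hSP)), (hK (by decide)).ncard_edgeSet_between,
      hKS.ncard_edgeSet_between, hP₃, hP₀₁₂, hP₂, hS]
    ring
  · have := h.le_ncard (fun t ht => exists_mem_of_isNClique_three_between_sup (hD (by decide))
      (hD (by decide)) ((hD (by decide)).mono_right hSP) ht) (Set.toFinite S)
    omega
end

section
/- The balanced blow-up of C₅ on 5m vertices (each vertex of the 5-cycle replaced by an independent set of size m, each edge by a complete bipartite graph) is triangle-free and contains exactly m⁵ cycles of length 5. -/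
/-- The balanced blow-up of the 5-cycle `C₅` with independent sets of size `m`:
`(i,a)` is adjacent to `(j,b)` iff `i` and `j` are adjacent in the 5-cycle. -/
def c5Blowup (m : ℕ) : SimpleGraph (Fin 5 × Fin m) :=
  (SimpleGraph.cycleGraph 5).comap Prod.fst

lemma c5_cliqueFree : (SimpleGraph.cycleGraph 5).CliqueFree 3 := by
  unfold SimpleGraph.CliqueFree; decide

lemma c5_no_twins : ∀ u v : Fin 5,
    (∀ w, (SimpleGraph.cycleGraph 5).Adj u w ↔ (SimpleGraph.cycleGraph 5).Adj v w) → u = v := by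
  decide

/-- The balanced blow-up of `C₅` on `5m` vertices is triangle-free and contains exactly
`m⁵` cycles of length 5, counted as 5-element vertex subsets inducing a copy of `C₅`. -/
theorem c5Blowup_triangleFree_and_c5_count (m : ℕ) :
    (c5Blowup m).CliqueFree 3 ∧
    {s : Finset (Fin 5 × Fin m) | s.card = 5 ∧
        Nonempty ((c5Blowup m).induce ↑s ≃g SimpleGraph.cycleGraph 5)}.ncard = m ^ 5 := by
  constructor
  · intro t ht
    apply c5_cliqueFree (t.image Prod.fst)
    constructor
    · intro a ha b hb hab
      obtain ⟨x, hx, rfl⟩ := Finset.mem_image.mp ha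
      obtain ⟨y, hy, rfl⟩ := Finset.mem_image.mp hb
      exact ht.1 hx hy (fun h => hab (by rw [h]))
    · rw [Finset.card_image_of_injOn, ht.2]
      intro x hx y hy hxy
      by_contra hne
      have h5 : (SimpleGraph.cycleGraph 5).Adj x.1 y.1 := ht.1 hx hy hne
      exact h5.ne hxy
  · have hFinj : Function.Injective
        (fun g : Fin 5 → Fin m => Finset.univ.image fun i => (i, g i)) := by
      intro g g' h
      funext i
      have h2 : Finset.univ.image (fun i => (i, g i)) =
          Finset.univ.image (fun i => (i, g' i)) := h
      have hi : (i, g i) ∈ Finset.univ.image fun j => (j, g' j) := by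
        rw [← h2]; exact Finset.mem_image.mpr ⟨i, Finset.mem_univ i, rfl⟩
      obtain ⟨j, -, hj⟩ := Finset.mem_image.mp hi
      have : j = i := congrArg Prod.fst hj
      subst this
      exact (congrArg Prod.snd hj).symm
    have key : {s : Finset (Fin 5 × Fin m) | s.card = 5 ∧
        Nonempty ((c5Blowup m).induce ↑s ≃g SimpleGraph.cycleGraph 5)} =
        Set.range (fun g : Fin 5 → Fin m => Finset.univ.image fun i => (i, g i)) := by
      ext s
      simp only [Set.mem_setOf_eq, Set.mem_range]
      constructor
      · rintro ⟨hcard, ⟨e⟩⟩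
        have hinj : Set.InjOn Prod.fst (s : Set (Fin 5 × Fin m)) := by
          intro x hx y hy hxy
          have hxy' : e ⟨x, hx⟩ = e ⟨y, hy⟩ := by
            apply c5_no_twins
            intro w
            have hw := e.apply_symm_apply w
            conv_lhs => rw [← hw]
            conv_rhs => rw [← hw]
            rw [e.map_rel_iff, e.map_rel_iff]
            show (SimpleGraph.cycleGraph 5).Adj x.1 _ ↔ (SimpleGraph.cycleGraph 5).Adj y.1 _
            rw [hxy]
          have := e.injective hxy'
          exact congrArg Subtype.val this
        have himg : s.image Prod.fst = Finset.univ := by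
          apply Finset.eq_univ_of_card
          rw [Finset.card_image_of_injOn hinj, hcard]
          simp
        have hex : ∀ i : Fin 5, ∃ a, (i, a) ∈ s := by
          intro i
          have hi : i ∈ s.image Prod.fst := by rw [himg]; exact Finset.mem_univ i
          obtain ⟨x, hx, hxi⟩ := Finset.mem_image.mp hi
          exact ⟨x.2, by rwa [← hxi]⟩
        choose g hg using hex
        refine ⟨g, Finset.eq_of_subset_of_card_le ?_ ?_⟩
        · intro x hx
          obtain ⟨i, -, rfl⟩ := Finset.mem_image.mp hx
          exact hg i
        · rw [hcard, Finset.card_image_of_injective _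
            (fun i j h => congrArg Prod.fst h)]
          simp
      · rintro ⟨g, rfl⟩
        have hginj : Function.Injective (fun i : Fin 5 => (i, g i)) :=
          fun i j h => congrArg Prod.fst h
        constructor
        · rw [Finset.card_image_of_injective _ hginj]; simp
        · refine ⟨⟨⟨fun v => v.1.1, fun i => ⟨(i, g i), by simp⟩, ?_, ?_⟩, ?_⟩⟩
          · rintro ⟨v, hv⟩
            obtain ⟨i, -, rfl⟩ := Finset.mem_image.mp (Finset.mem_coe.mp hv)
            rfl
          · intro i; rfl
          · intro a b
            exact Iff.rfl
    rw [key, ← Set.image_univ, Set.ncard_image_of_injective _ hFinj, Set.ncard_univ]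
    simp [Nat.card_eq_fintype_card]
end

section
/- Erdős–Gallai theorem: a sequence of nonnegative integers d₁ ≥ d₂ ≥ … ≥ d_n is the degree sequence of some simple graph if and only if Σᵢ dᵢ is even and for every k ∈ {1,…,n}, Σ_{i=1}^k dᵢ ≤ k(k−1) + Σ_{i=k+1}^n min(dᵢ, k). -/
/-!
Necessity: in a graph, the `k` vertices of largest degree have at most `k (k - 1)` edge ends
among themselves, and every other vertex `v` sends at most `min (deg v) k` edges to them.

Sufficiency (Choudum) is by induction on the degree sum. Let `M` be the last positive term and
`t < M` the end of the initial block of terms equal to `d 0`, cut off before `M`. Lowering `d t`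
and `d M` by one keeps the sequence nonincreasing, keeps the sum even and keeps the inequalities
(for `k ≤ t` this uses the inequality at `t + 1` and, in one corner case, parity), so the lowered
sequence is realized by a graph. Adding the edge `tM` realizes `d`; if that edge is already
present, a 2-switch through a vertex `b` that `t` misses and that has larger degree than `M`
removes it first.
-/

open Finset

theorem Equiv.Perm.exists_comp_eq_of_map_univ_eq {α β : Type*} [Fintype α] [DecidableEq β]
    {f g : α → β} (h : Multiset.map f univ.val = Multiset.map g univ.val) :
    ∃ σ : Equiv.Perm α, ∀ a, f (σ a) = g a := by
  have hfiber (c : β) : Fintype.card {a // g a = c} = Fintype.card {a // f a = c} := by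
    have := congrArg (Multiset.count c) h
    simp only [Multiset.count_map, eq_comm (a := c)] at this
    simpa only [Fintype.card_subtype, Finset.card, Finset.filter_val] using this.symm
  exact ⟨Equiv.ofFiberEquiv fun c => Fintype.equivOfCardEq (hfiber c),
    Equiv.ofFiberEquiv_map _⟩

theorem Nat.mul_min_le_mul_min {a k m : ℕ} (h : k ≤ m) : k * min a m ≤ m * min a k := by
  rcases le_total a k with hak | hka
  · rw [min_eq_left hak, min_eq_left (hak.trans h)]
    exact Nat.mul_le_mul_right a h
  · rw [min_eq_right hka, Nat.mul_comm m k]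
    exact Nat.mul_le_mul_left k (min_le_right a m)

theorem Fin.sum_filter_val {n : ℕ} (p : ℕ → Prop) [DecidablePred p] (f : ℕ → ℕ) :
    ∑ i ∈ univ.filter (fun i : Fin n => p i), f i = ∑ i ∈ (range n).filter p, f i := by
  rw [sum_filter, sum_filter]
  exact Fin.sum_univ_eq_sum_range (fun i => if p i then f i else 0) n

theorem Fin.exists_antitone_extend {n : ℕ} {d : Fin n → ℕ} (hd : Antitone d) :
    ∃ D : ℕ → ℕ, Antitone D ∧ D n = 0 ∧ d = fun i => D i.val := by
  refine ⟨fun i => if h : i < n then d ⟨i, h⟩ else 0, fun i j hij => ?_,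
    dif_neg (lt_irrefl n), funext fun i => by simp⟩
  simp only
  split_ifs with hi hj hj
  · exact hd (Fin.mk_le_mk.2 hij)
  · omega
  · exact Nat.zero_le _
  · exact le_rfl

namespace SimpleGraph

variable {V : Type*}

theorem exists_map_ncard_neighborSet_eq_iff [Fintype V] (f : V → ℕ) :
    (∃ G : SimpleGraph V, Multiset.map (fun v => (G.neighborSet v).ncard) univ.val =
      Multiset.map f univ.val) ↔ ∃ G : SimpleGraph V, ∀ v, (G.neighborSet v).ncard = f v := by
  refine ⟨fun ⟨G, hG⟩ => ?_, fun ⟨G, hG⟩ => ⟨G, by simp only [hG]⟩⟩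
  obtain ⟨σ, hσ⟩ := Equiv.Perm.exists_comp_eq_of_map_univ_eq hG
  refine ⟨G.comap σ, fun v => ?_⟩
  rw [← hσ v]
  exact Set.ncard_preimage_of_injective_subset_range σ.injective fun w _ => σ.surjective w

variable (G : SimpleGraph V)

theorem ncard_neighborSet_eq_degree [Fintype V] [DecidableRel G.Adj] (v : V) :
    (G.neighborSet v).ncard = G.degree v := by
  rw [← Nat.card_coe_set_eq, Nat.card_eq_fintype_card, card_neighborSet_eq_degree]

theorem sum_degree_le_card_mul_add_sum_min [Fintype V] [DecidableEq V] [DecidableRel G.Adj]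
    (S : Finset V) :
    ∑ v ∈ S, G.degree v ≤ #S * (#S - 1) + ∑ v ∈ Sᶜ, min (G.degree v) #S := by
  have hinside (v) (hv : v ∈ S) :
      G.degree v ≤ (#S - 1) + #(Sᶜ.bipartiteAbove G.Adj v) := by
    have hsub : G.neighborFinset v ⊆ S.erase v ∪ Sᶜ.bipartiteAbove G.Adj v := by
      intro w hw
      rw [mem_neighborFinset] at hw
      by_cases hwS : w ∈ S
      · exact mem_union_left _ (mem_erase.2 ⟨hw.ne.symm, hwS⟩)
      · exact mem_union_right _ (mem_filter.2 ⟨mem_compl.2 hwS, hw⟩)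
    rw [← card_neighborFinset_eq_degree, ← card_erase_of_mem hv]
    exact (card_le_card hsub).trans (card_union_le _ _)
  have houtside (w) : #(S.bipartiteBelow G.Adj w) ≤ min (G.degree w) #S :=
    le_min (card_le_card fun v hv => (G.mem_neighborFinset w v).2 (mem_filter.1 hv).2.symm)
      (card_filter_le _ _)
  calc ∑ v ∈ S, G.degree v
      ≤ ∑ v ∈ S, ((#S - 1) + #(Sᶜ.bipartiteAbove G.Adj v)) := sum_le_sum hinside
    _ = #S * (#S - 1) + ∑ w ∈ Sᶜ, #(S.bipartiteBelow G.Adj w) := by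
      rw [sum_add_distrib, sum_const, smul_eq_mul,
        sum_card_bipartiteAbove_eq_sum_card_bipartiteBelow]
    _ ≤ #S * (#S - 1) + ∑ w ∈ Sᶜ, min (G.degree w) #S := by gcongr with w; exact houtside w

theorem ncard_neighborSet_sup_edge [Finite V] [DecidableEq V] {u w : V} (huw : u ≠ w)
    (h : ¬G.Adj u w) (v : V) :
    ((G ⊔ edge u w).neighborSet v).ncard =
      (G.neighborSet v).ncard + ((if v = u then 1 else 0) + (if v = w then 1 else 0)) := by
  by_cases hvu : v = u
  · subst hvu
    have : (G ⊔ edge v w).neighborSet v = insert w (G.neighborSet v) := by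
      ext x; simp only [mem_neighborSet, sup_adj, edge_adj, Set.mem_insert_iff]; grind
    rw [this, Set.ncard_insert_of_notMem (s := G.neighborSet v) h, if_pos rfl, if_neg huw]
  by_cases hvw : v = w
  · subst hvw
    have : (G ⊔ edge u v).neighborSet v = insert u (G.neighborSet v) := by
      ext x; simp only [mem_neighborSet, sup_adj, edge_adj, Set.mem_insert_iff]; grind
    rw [this, Set.ncard_insert_of_notMem (s := G.neighborSet v) (fun h' => h h'.symm),
      if_neg hvu, if_pos rfl]
  · have : (G ⊔ edge u w).neighborSet v = G.neighborSet v := by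
      ext x; simp [edge_adj, hvu, hvw]
    simp [this, hvu, hvw]

theorem exists_not_adj_of_ncard_lt_card [Finite V] (v : V) (s : Finset V)
    (h : (G.neighborSet v).ncard < #s) : ∃ b ∈ s, ¬G.Adj v b := by
  by_contra! hs
  have := Set.ncard_le_ncard (s := (s : Set V)) (t := G.neighborSet v) (fun b hb => hs b hb)
  rw [Set.ncard_coe_finset] at this
  omega

theorem exists_adj_not_adj_of_ncard_lt [Finite V] {a b c : V} (hac : G.Adj a c)
    (hab : ¬G.Adj a b) (hlt : (G.neighborSet c).ncard < (G.neighborSet b).ncard) :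
    ∃ x, G.Adj b x ∧ ¬G.Adj c x ∧ x ≠ c := by
  have hpos : 0 < (G.neighborSet c \ G.neighborSet b).ncard :=
    (Set.ncard_pos (Set.toFinite _)).2 ⟨a, hac.symm, fun h => hab h.symm⟩
  have hb := Set.ncard_inter_add_ncard_sdiff_eq_ncard (G.neighborSet b) (G.neighborSet c)
  have hc := Set.ncard_inter_add_ncard_sdiff_eq_ncard (G.neighborSet c) (G.neighborSet b)
  rw [Set.inter_comm] at hc
  obtain ⟨x, ⟨hbx, hcx⟩, hxc⟩ :=
    Set.exists_ne_of_one_lt_ncard (s := G.neighborSet b \ G.neighborSet c) (by omega) c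
  exact ⟨x, hbx, hcx, hxc⟩

theorem exists_ncard_neighborSet_eq_and_not_adj [Finite V] {a b c : V} (hac : G.Adj a c)
    (hab : ¬G.Adj a b) (hba : b ≠ a)
    (hlt : (G.neighborSet c).ncard < (G.neighborSet b).ncard) :
    ∃ H : SimpleGraph V, (∀ v, (H.neighborSet v).ncard = (G.neighborSet v).ncard) ∧
      ¬H.Adj a c := by
  classical
  obtain ⟨x, hbx, hcx, hxc⟩ := G.exists_adj_not_adj_of_ncard_lt hac hab hlt
  -- `G` and the switched graph are a common core plus two edges covering `a, b, c, x` once each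
  set K := G \ (edge a c ⊔ edge b x)
  have hG : G = K ⊔ edge a c ⊔ edge b x := by
    rw [sup_assoc, sdiff_sup_cancel]
    exact sup_le ((edge_le_iff G).2 (Or.inr hac)) ((edge_le_iff G).2 (Or.inr hbx))
  refine ⟨K ⊔ edge a b ⊔ edge c x, fun v => ?_, ?_⟩
  · conv_rhs => rw [hG]
    rw [ncard_neighborSet_sup_edge _ hbx.ne, ncard_neighborSet_sup_edge _ hac.ne,
      ncard_neighborSet_sup_edge _ hxc.symm, ncard_neighborSet_sup_edge _ hba.symm]
    · split_ifs <;> omega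
    all_goals simp only [K, sup_adj, sdiff_adj, edge_adj]; grind [hac.ne, hbx.ne]
  · simp only [K, sup_adj, sdiff_adj, edge_adj]; grind [hac.ne, hbx.ne]

end SimpleGraph

/-- `d 0, …, d (n - 1)` play the role of `d₁, …, dₙ`. -/
def IsErdosGallai (n : ℕ) (d : ℕ → ℕ) : Prop :=
  ∀ k ≤ n, ∑ i ∈ range k, d i ≤ k * (k - 1) + ∑ i ∈ Ico k n, min (d i) k

theorem isErdosGallai_iff {n : ℕ} (d : ℕ → ℕ) :
    IsErdosGallai n d ↔ ∀ k, 1 ≤ k → k ≤ n →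
      ∑ i ∈ univ.filter (fun i : Fin n => i.val < k), d i ≤
        k * (k - 1) + ∑ i ∈ univ.filter (fun i : Fin n => k ≤ i.val), min (d i) k := by
  have hrange (k : ℕ) (hk : k ≤ n) : (range n).filter (· < k) = range k := by
    rw [range_eq_Ico, Ico_filter_lt, min_eq_right hk, range_eq_Ico]
  have hIco (k : ℕ) : (range n).filter (k ≤ ·) = Ico k n := by
    rw [range_eq_Ico, Ico_filter_le, Nat.zero_max]
  have hsums (k : ℕ) (hk : k ≤ n) :
      (∑ i ∈ univ.filter (fun i : Fin n => i.val < k), d i ≤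
        k * (k - 1) + ∑ i ∈ univ.filter (fun i : Fin n => k ≤ i.val), min (d i) k) ↔
      ∑ i ∈ range k, d i ≤ k * (k - 1) + ∑ i ∈ Ico k n, min (d i) k := by
    rw [Fin.sum_filter_val (· < k) d, Fin.sum_filter_val (k ≤ ·) (fun i => min (d i) k),
      hrange k hk, hIco]
  refine ⟨fun h k _ hk => (hsums k hk).2 (h k hk), fun h k hk => ?_⟩
  rcases Nat.eq_zero_or_pos k with rfl | hk0
  · simp
  · exact (hsums k hk).1 (h k hk0 hk)

theorem isErdosGallai_of_ncard_neighborSet_eq {n : ℕ} {d : ℕ → ℕ} (G : SimpleGraph (Fin n))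
    (hG : ∀ v, (G.neighborSet v).ncard = d v) : IsErdosGallai n d := by
  classical
  refine (isErdosGallai_iff d).2 fun k _ hk => ?_
  have hS : #(univ.filter fun v : Fin n => v.val < k) = k := by
    rw [Fin.card_filter_val_lt, min_eq_right hk]
  have hSc : (univ.filter fun v : Fin n => v.val < k)ᶜ =
      univ.filter fun v : Fin n => k ≤ v.val := by
    rw [compl_filter]; simp only [not_lt]
  have := G.sum_degree_le_card_mul_add_sum_min (univ.filter fun v : Fin n => v.val < k)
  simpa only [hS, hSc, ← G.ncard_neighborSet_eq_degree, hG] using this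

theorem even_sum_of_ncard_neighborSet_eq {n : ℕ} {d : ℕ → ℕ} (G : SimpleGraph (Fin n))
    (hG : ∀ v, (G.neighborSet v).ncard = d v) : Even (∑ i ∈ range n, d i) := by
  classical
  rw [← Fin.sum_univ_eq_sum_range]
  simp only [← hG, G.ncard_neighborSet_eq_degree, G.sum_degrees_eq_twice_card_edges]
  exact even_two_mul _

namespace ErdosGallai

variable {n t M : ℕ} {d : ℕ → ℕ}

def lowerPair (d : ℕ → ℕ) (t M i : ℕ) : ℕ := if i = t ∨ i = M then d i - 1 else d i

theorem lowerPair_le (i : ℕ) : lowerPair d t M i ≤ d i := by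
  unfold lowerPair; split_ifs <;> omega

theorem lowerPair_add (ht : 0 < d t) (hM : 0 < d M) (htM : t ≠ M) (i : ℕ) :
    lowerPair d t M i + ((if i = t then 1 else 0) + (if i = M then 1 else 0)) = d i := by
  unfold lowerPair
  rcases eq_or_ne i t with rfl | hit
  · simp [htM]; omega
  rcases eq_or_ne i M with rfl | hiM
  · simp [hit]; omega
  · simp [hit, hiM]

theorem sum_lowerPair_add (ht : 0 < d t) (hM : 0 < d M) (htM : t ≠ M) (s : Finset ℕ) :
    ∑ i ∈ s, lowerPair d t M i + ((if t ∈ s then 1 else 0) + (if M ∈ s then 1 else 0)) =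
      ∑ i ∈ s, d i := by
  rw [← sum_ite_eq' s t (fun _ => 1), ← sum_ite_eq' s M (fun _ => 1), ← sum_add_distrib,
    ← sum_add_distrib]
  exact sum_congr rfl fun i _ => lowerPair_add ht hM htM i

theorem sum_min_le_sum_min_lowerPair (s : Finset ℕ) (m : ℕ) :
    ∑ i ∈ s, min (d i) m ≤
      ∑ i ∈ s, min (lowerPair d t M i) m +
        ((if t ∈ s then 1 else 0) + (if M ∈ s then 1 else 0)) := by
  rw [← sum_ite_eq' s t (fun _ => 1), ← sum_ite_eq' s M (fun _ => 1), ← sum_add_distrib,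
    ← sum_add_distrib]
  refine sum_le_sum fun i _ => ?_
  unfold lowerPair
  split_ifs <;> omega

theorem antitone_lowerPair (hd : Antitone d) (htM : t < M) (hdrop : t + 1 = M ∨ d (t + 1) < d t)
    (hzero : d (M + 1) = 0) : Antitone (lowerPair d t M) := by
  refine antitone_nat_of_succ_le fun i => ?_
  have hi : d (i + 1) ≤ d i := hd (Nat.le_succ i)
  unfold lowerPair
  rcases eq_or_ne i t with rfl | hit
  · rcases hdrop with h | h <;> split_ifs <;> omega
  rcases eq_or_ne i M with rfl | hiM
  · split_ifs <;> omega
  · split_ifs <;> omega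

theorem lowerPair_erdosGallai_of_lt (ht : 0 < d t) (hM : 0 < d M) (htM : t < M)
    {k : ℕ} (htk : t < k)
    (h : ∑ i ∈ range k, d i ≤ k * (k - 1) + ∑ i ∈ Ico k n, min (d i) k) :
    ∑ i ∈ range k, lowerPair d t M i ≤
      k * (k - 1) + ∑ i ∈ Ico k n, min (lowerPair d t M i) k := by
  have hleft := sum_lowerPair_add ht hM htM.ne (range k)
  have hright := sum_min_le_sum_min_lowerPair (d := d) (t := t) (M := M) (Ico k n) k
  simp only [mem_range, mem_Ico] at hleft hright
  split_ifs at hleft hright <;> omega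

/-- The inequality at `t + 1`, with `min (·) (t + 1)` traded for `min (·) k`. -/
theorem mul_le_sum_min_lowerPair (hconst : ∀ i ≤ t, d i = d 0) (htM : t < M) (hMn : M < n)
    (hEG : IsErdosGallai n d) {k : ℕ} (hk : k ≤ t) :
    k * d 0 ≤ k * t + ∑ i ∈ Ico (t + 1) n, min (lowerPair d t M i) k := by
  set X := ∑ i ∈ Ico (t + 1) n, min (lowerPair d t M i) k
  set Y := ∑ i ∈ Ico (t + 1) n, min (d i) (t + 1)
  set Y' := ∑ i ∈ Ico (t + 1) n, min (lowerPair d t M i) (t + 1)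
  have hEGt : (t + 1) * d 0 ≤ (t + 1) * t + Y := by
    have := hEG (t + 1) (by omega)
    rwa [sum_congr rfl fun i hi => hconst i (Nat.lt_succ_iff.1 (mem_range.1 hi)), sum_const,
      card_range, smul_eq_mul, Nat.add_sub_cancel] at this
  have hYY' : Y ≤ Y' + 1 := by
    have := sum_min_le_sum_min_lowerPair (d := d) (t := t) (M := M) (Ico (t + 1) n) (t + 1)
    simp only [mem_Ico] at this
    split_ifs at this <;> omega
  have hY'X : k * Y' ≤ (t + 1) * X := by
    rw [mul_sum, mul_sum]
    exact sum_le_sum fun i _ => Nat.mul_min_le_mul_min (by omega)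
  have hlt : (t + 1) * (k * d 0) < (t + 1) * (k * t + X + 1) := by
    nlinarith [Nat.mul_le_mul_left k hEGt, Nat.mul_le_mul_left k hYY']
  exact Nat.lt_succ_iff.1 (Nat.lt_of_mul_lt_mul_left hlt)

theorem lowerPair_succ_pos (hd : Antitone d) (hconst : ∀ i ≤ t, d i = d 0) (htM : t < M)
    (hMn : M < n) (hMpos : 0 < d M) (hzero : d (M + 1) = 0)
    (heven : Even (∑ i ∈ range n, d i)) (hd0 : d 0 = t) : 0 < lowerPair d t M (t + 1) := by
  unfold lowerPair
  rcases (show t + 1 ≤ M from htM).lt_or_eq with htM' | rfl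
  · rw [if_neg (by omega)]
    exact hMpos.trans_le (hd htM'.le)
  rw [if_pos (Or.inr rfl)]
  -- otherwise the sum would be `(t + 1) * t + 1`, which is odd
  suffices d (t + 1) ≠ 1 by omega
  intro h1
  have htail : ∑ i ∈ Ico (t + 2) n, d i = 0 :=
    sum_eq_zero fun i hi => Nat.eq_zero_of_le_zero (hzero ▸ hd (mem_Ico.1 hi).1)
  have hhead : ∑ i ∈ range (t + 2), d i = t * (t + 1) + 1 := by
    rw [sum_range_succ, sum_congr rfl fun i hi => hconst i (Nat.lt_succ_iff.1 (mem_range.1 hi)),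
      sum_const, card_range, smul_eq_mul, hd0, h1, Nat.mul_comm]
  rw [← sum_range_add_sum_Ico _ (show t + 2 ≤ n by omega), htail, hhead, add_zero,
    Nat.even_add_one] at heven
  exact heven (Nat.even_mul_succ_self t)

theorem lowerPair_erdosGallai_of_le (hconst : ∀ i ≤ t, d i = d 0) (htM : t < M) (hMn : M < n)
    (hEG : IsErdosGallai n d) (htail : d 0 = t → 0 < lowerPair d t M (t + 1))
    {k : ℕ} (hk : k ≤ t) :
    ∑ i ∈ range k, lowerPair d t M i ≤
      k * (k - 1) + ∑ i ∈ Ico k n, min (lowerPair d t M i) k := by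
  set e := lowerPair d t M
  set X := ∑ i ∈ Ico (t + 1) n, min (e i) k
  have he (i : ℕ) (hi : i < t) : e i = d 0 := by
    simp only [e, lowerPair, if_neg (show ¬(i = t ∨ i = M) by omega), hconst i hi.le]
  have het : e t = d 0 - 1 := by simp [e, lowerPair, hconst t le_rfl]
  have hleft : ∑ i ∈ range k, e i = k * d 0 := by
    rw [sum_congr rfl fun i hi => he i (by simp at hi; omega), sum_const, card_range, smul_eq_mul]
  have hright : ∑ i ∈ Ico k n, min (e i) k = (t - k) * min (d 0) k + min (d 0 - 1) k + X := by
    rw [← sum_Ico_consecutive _ hk (by omega : t ≤ n),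
      sum_eq_sum_Ico_succ_bot (by omega : t < n),
      sum_congr rfl fun i hi => by rw [he i (mem_Ico.1 hi).2], sum_const, Nat.card_Ico,
      smul_eq_mul, het, add_assoc]
  rw [hleft, hright]
  rcases Nat.eq_zero_or_pos k with rfl | hk0
  · simp
  rcases lt_trichotomy (d 0) k with hlt | heq | hgt
  · have := Nat.mul_le_mul_left k (show d 0 ≤ k - 1 by omega)
    omega
  · rw [heq, min_self, min_eq_left (by omega : k - 1 ≤ k)]
    have hkk : k * k = k * (k - 1) + k := by cases k <;> simp [Nat.mul_succ]
    rcases hk.lt_or_eq with hkt | rfl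
    · have : k ≤ (t - k) * k := Nat.le_mul_of_pos_left k (by omega)
      omega
    · have hX : 1 ≤ X := by
        have hpos := htail heq
        calc 1 ≤ min (e (k + 1)) k := by omega
          _ ≤ X := single_le_sum (f := fun i => min (e i) k) (fun _ _ => Nat.zero_le _)
              (mem_Ico.2 ⟨le_rfl, by omega⟩)
      omega
  · have hkey : k * d 0 ≤ k * t + X := mul_le_sum_min_lowerPair hconst htM hMn hEG hk
    have hkt : k * (k - 1) + (t - k) * k + k = k * t := by
      obtain ⟨j, rfl⟩ := Nat.exists_eq_add_of_le hk
      obtain ⟨k, rfl⟩ := Nat.exists_eq_add_of_lt hk0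
      simp only [Nat.add_sub_cancel, Nat.add_sub_cancel_left]
      ring
    rw [min_eq_right hgt.le, min_eq_right (by omega : k ≤ d 0 - 1)]
    omega

theorem exists_last_pos (h0 : 0 < d 0) (hn : d n = 0) :
    ∃ M < n, 0 < d M ∧ d (M + 1) = 0 := by
  have hn0 : n ≠ 0 := by rintro rfl; omega
  have hex : ∃ m, d (m + 1) = 0 := ⟨n - 1, by rwa [Nat.sub_add_cancel (by omega)]⟩
  refine ⟨Nat.find hex, ?_, ?_, Nat.find_spec hex⟩
  · have := Nat.find_le (h := hex) (n := n - 1) (by rwa [Nat.sub_add_cancel (by omega)])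
    omega
  · rcases h : Nat.find hex with _ | m
    · exact h0
    · exact Nat.pos_of_ne_zero (Nat.find_min hex (h ▸ m.lt_succ_self))

theorem exists_end_of_first_block (hd : Antitone d) (hM : 0 < M) :
    ∃ t < M, (∀ i ≤ t, d i = d 0) ∧ (t + 1 = M ∨ d (t + 1) < d t) := by
  have hex : ∃ t, t + 1 = M ∨ d (t + 1) < d 0 := ⟨M - 1, Or.inl (by omega)⟩
  have hconst (i) (hi : i ≤ Nat.find hex) : d i = d 0 := by
    rcases i with _ | j
    · rfl
    · have := not_or.1 (Nat.find_min hex (show j < Nat.find hex by omega))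
      exact le_antisymm (hd (Nat.zero_le _)) (not_lt.1 this.2)
  refine ⟨Nat.find hex, ?_, hconst, ?_⟩
  · have := Nat.find_le (h := hex) (n := M - 1) (Or.inl (by omega))
    omega
  · rw [hconst _ le_rfl]
    exact Nat.find_spec hex

theorem exists_ncard_neighborSet_eq_of_lowerPair (hd : Antitone d) (htM : t < M) (hMn : M < n)
    (hMpos : 0 < d M) (hd0M : d 0 ≤ M) (G : SimpleGraph (Fin n))
    (hG : ∀ v, (G.neighborSet v).ncard = lowerPair d t M v) :
    ∃ H : SimpleGraph (Fin n), ∀ v, (H.neighborSet v).ncard = d v := by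
  set tF : Fin n := ⟨t, by omega⟩
  set MF : Fin n := ⟨M, hMn⟩
  have htMF : tF ≠ MF := by simp [tF, MF, Fin.ext_iff, htM.ne]
  have htpos : 0 < d t := hMpos.trans_le (hd htM.le)
  obtain ⟨H, hH, hHadj⟩ : ∃ H : SimpleGraph (Fin n),
      (∀ v, (H.neighborSet v).ncard = (G.neighborSet v).ncard) ∧ ¬H.Adj tF MF := by
    by_cases hadj : G.Adj tF MF
    swap
    · exact ⟨G, fun _ => rfl, hadj⟩
    -- `t` has fewer than `M` neighbours, so it misses some `b < M`
    obtain ⟨b, hb, hnadj⟩ := G.exists_not_adj_of_ncard_lt_card tF ((Iic MF).erase tF) (by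
      rw [hG, card_erase_of_mem (mem_Iic.2 (Fin.mk_le_mk.2 htM.le)), Fin.card_Iic]
      simp only [tF, lowerPair, true_or, if_true]
      have := hd (Nat.zero_le t)
      omega)
    obtain ⟨hbt, hbM⟩ := mem_erase.1 hb
    have hbM' : b.val < M := lt_of_le_of_ne (Fin.le_iff_val_le_val.1 (mem_Iic.1 hbM)) fun h =>
      hnadj (by rwa [show b = MF from Fin.ext h])
    refine G.exists_ncard_neighborSet_eq_and_not_adj hadj hnadj hbt ?_
    rw [hG, hG]
    simp only [MF, lowerPair, or_true, if_true]
    rw [if_neg (by simp [tF, Fin.ext_iff] at hbt; omega)]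
    have := hd hbM'.le
    omega
  refine ⟨H ⊔ SimpleGraph.edge tF MF, fun v => ?_⟩
  rw [SimpleGraph.ncard_neighborSet_sup_edge _ htMF hHadj, hH, hG,
    ← lowerPair_add htpos hMpos htM.ne v]
  simp [tF, MF, Fin.ext_iff]

end ErdosGallai

open ErdosGallai

namespace IsErdosGallai

variable {n t M : ℕ} {d : ℕ → ℕ}

theorem apply_zero_le (hEG : IsErdosGallai n d) (hd : Antitone d) (hMn : M < n)
    (hzero : d (M + 1) = 0) : d 0 ≤ M := by
  have h1 := hEG 1 (by omega)
  rw [← sum_Ico_consecutive _ (by omega : 1 ≤ M + 1) hMn,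
    sum_eq_zero (s := Ico (M + 1) n) fun i hi => by
      simp [Nat.eq_zero_of_le_zero (hzero ▸ hd (mem_Ico.1 hi).1 : d i ≤ 0)]] at h1
  calc d 0 ≤ ∑ i ∈ Ico 1 (M + 1), min (d i) 1 := by simpa using h1
    _ ≤ ∑ i ∈ Ico 1 (M + 1), 1 := sum_le_sum fun i _ => min_le_right _ _
    _ = M := by simp

theorem lowerPair (hEG : IsErdosGallai n d) (hd : Antitone d)
    (hconst : ∀ i ≤ t, d i = d 0) (htM : t < M) (hMn : M < n) (hMpos : 0 < d M)
    (hzero : d (M + 1) = 0) (heven : Even (∑ i ∈ range n, d i)) :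
    IsErdosGallai n (ErdosGallai.lowerPair d t M) := by
  intro k hk
  rcases le_or_gt k t with hkt | htk
  · exact lowerPair_erdosGallai_of_le hconst htM hMn hEG
      (lowerPair_succ_pos hd hconst htM hMn hMpos hzero heven) hkt
  · exact lowerPair_erdosGallai_of_lt (hMpos.trans_le (hd htM.le)) hMpos htM htk (hEG k hk)

theorem exists_graph (hEG : IsErdosGallai n d) (hd : Antitone d) (hn : d n = 0)
    (heven : Even (∑ i ∈ range n, d i)) :
    ∃ G : SimpleGraph (Fin n), ∀ v, (G.neighborSet v).ncard = d v := by
  induction hs : ∑ i ∈ range n, d i using Nat.strong_induction_on generalizing d with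
  | _ s ih =>
  rcases Nat.eq_zero_or_pos (d 0) with h0 | h0
  · refine ⟨⊥, fun v => ?_⟩
    have := hd (Nat.zero_le v)
    simp only [SimpleGraph.neighborSet_bot, Set.ncard_empty]
    omega
  obtain ⟨M, hMn, hMpos, hzero⟩ := exists_last_pos h0 hn
  have hd0M := hEG.apply_zero_le hd hMn hzero
  obtain ⟨t, htM, hconst, hdrop⟩ := exists_end_of_first_block hd (by omega : 0 < M)
  have hsum := sum_lowerPair_add (hMpos.trans_le (hd htM.le)) hMpos htM.ne (range n)
  simp only [mem_range, if_pos (htM.trans hMn), if_pos hMn] at hsum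
  obtain ⟨G, hG⟩ := ih _ (by omega) (hEG.lowerPair hd hconst htM hMn hMpos hzero heven)
    (antitone_lowerPair hd htM hdrop hzero) (Nat.eq_zero_of_le_zero (hn ▸ lowerPair_le n))
    (by rw [← hsum] at heven; exact (Nat.even_add.1 heven).2 even_two) rfl
  exact exists_ncard_neighborSet_eq_of_lowerPair hd htM hMn hMpos hd0M G hG

end IsErdosGallai

/-- Erdős–Gallai theorem: a nonincreasing sequence `d₁ ≥ d₂ ≥ … ≥ d_n` of natural
numbers is the degree sequence of some simple graph if and only if `Σᵢ dᵢ` is even and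
for every `k ∈ {1,…,n}`, `Σ_{i=1}^k dᵢ ≤ k(k-1) + Σ_{i=k+1}^n min(dᵢ, k)`.
(Here the sequence is indexed by `Fin n`, so `dᵢ` is `d ⟨i-1⟩`.) -/
theorem erdos_gallai {n : ℕ} (d : Fin n → ℕ) (hd : Antitone d) :
    (∃ G : SimpleGraph (Fin n),
        Multiset.map (fun v => (G.neighborSet v).ncard) Finset.univ.val =
          Multiset.map d Finset.univ.val) ↔
      (Even (∑ i, d i) ∧
        ∀ k, 1 ≤ k → k ≤ n →
          ∑ i ∈ Finset.univ.filter (fun i : Fin n => i.val < k), d i ≤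
            k * (k - 1) +
              ∑ i ∈ Finset.univ.filter (fun i : Fin n => k ≤ i.val), min (d i) k) := by
  obtain ⟨D, hD, hDn, rfl⟩ := Fin.exists_antitone_extend hd
  rw [SimpleGraph.exists_map_ncard_neighborSet_eq_iff, Fin.sum_univ_eq_sum_range (fun i => D i),
    ← isErdosGallai_iff]
  constructor
  · rintro ⟨G, hG⟩
    exact ⟨even_sum_of_ncard_neighborSet_eq G hG, isErdosGallai_of_ncard_neighborSet_eq G hG⟩
  · rintro ⟨heven, hEG⟩
    exact hEG.exists_graph hD hDn heven
end
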